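/- The depth of the unique half-full tree with l leaves equals the ceiling of log base 2 of l. -/

import Mathlib

inductive BTree : Type
  | leaf : BTree
  | node : BTree → BTree → BTree
deriving DecidableEq

namespace BTree

/-- Number of leaves of a binary tree. -/
def leaves : BTree → ℕ
  | leaf => 1
  | node l r => leaves l + leaves r

/-- Depth (height) of a binary tree. -/
def depth : BTree → ℕ
  | leaf => 0
  | node l r => max (depth l) (depth r) + 1

/-- Number of internal (non-leaf) nodes. -/
def internals : BTree → ℕ
  | leaf => 0
  | node l r => internals l + internals r + 1

/-- A complete binary tree: full, with all leaves at the same depth. -/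
def IsComplete : BTree → Prop
  | leaf => True
  | node l r => IsComplete l ∧ IsComplete r ∧ depth l = depth r

/-- A half-full tree (haft): every non-leaf node has two children, and its
left child is the root of a complete subtree containing at least half of the
node's leaf-descendants. -/
def IsHaft : BTree → Prop
  | leaf => True
  | node l r => IsComplete l ∧ leaves r ≤ leaves l ∧ IsHaft r

end BTree

/-!
A haft `node l r` has a complete left subtree, so `l` has `2 ^ d` leaves where `d` is its depth,
and the right subtree has between `1` and `2 ^ d` leaves. By induction the right subtree has depth
`⌈log₂ (leaves r)⌉ ≤ d`, so the whole tree has depth `d + 1`; and `2 ^ d < 2 ^ d + leaves r ≤ 2 ^ (d + 1)`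
says precisely that `⌈log₂⌉` of its leaf count is `d + 1` as well.
-/

theorem Nat.clog_eq_succ_of_pow_lt_of_le {b n d : ℕ} (hb : 1 < b) (hlt : b ^ d < n)
    (hle : n ≤ b ^ (d + 1)) : Nat.clog b n = d + 1 :=
  le_antisymm ((Nat.clog_le_iff_le_pow hb).2 hle) ((Nat.lt_clog_iff_pow_lt hb).2 hlt)

namespace BTree

theorem leaves_pos (t : BTree) : 0 < t.leaves := by
  induction t with
  | leaf => exact Nat.one_pos
  | node l r ihl _ => exact Nat.add_pos_left ihl _

theorem IsComplete.leaves_eq_two_pow {t : BTree} (h : t.IsComplete) :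
    t.leaves = 2 ^ t.depth := by
  induction t with
  | leaf => rfl
  | node l r ihl ihr =>
    obtain ⟨hl, hr, hdepth⟩ := h
    simp only [leaves, depth, ihl hl, ihr hr, hdepth, max_self, pow_succ]
    ring

theorem IsHaft.depth_eq_clog_leaves {t : BTree} (ht : t.IsHaft) :
    t.depth = Nat.clog 2 t.leaves := by
  induction t with
  | leaf => rfl
  | node l r _ ihr =>
    obtain ⟨hl, hle, hr⟩ := ht
    have hleaves_l : l.leaves = 2 ^ l.depth := hl.leaves_eq_two_pow
    have hdepth_r : r.depth ≤ l.depth := by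
      rw [ihr hr, Nat.clog_le_iff_le_pow one_lt_two]
      exact hleaves_l ▸ hle
    have hpos := r.leaves_pos
    rw [depth, max_eq_left hdepth_r, leaves, hleaves_l]
    refine (Nat.clog_eq_succ_of_pow_lt_of_le one_lt_two ?_ ?_).symm
    · omega
    · rw [pow_succ]
      omega

end BTree

theorem haft_depth_general (l : ℕ) (t : BTree) (ht : t.IsHaft)
    (hleaves : t.leaves = l) : t.depth = Nat.clog 2 l :=
  hleaves ▸ ht.depth_eq_clog_leaves

/-- The depth of a half-full tree with `l` leaves is `⌈log₂ l⌉`. -/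
theorem haft_depth (l : ℕ) (hl : 0 < l) (t : BTree) (ht : t.IsHaft)
    (hleaves : t.leaves = l) : t.depth = Nat.clog 2 l :=
  haft_depth_general l t ht hleaves
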